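/- arXiv:2008.07322 — 3 statements merged into one kernel-verified Lean document; each statement's English description precedes it below -/
import Mathlib

section
/- If G is a finite Z-group with nontrivial center, then the cyclic graph Δ(G) is connected with diameter at most 2. -/
/-! A nontrivial central element `z` commutes with every `x`, and in a finite Z-group two
commuting elements generate an abelian, hence nilpotent, hence cyclic subgroup. So `z` is
adjacent to every other vertex of `Δ(G)`, and any two vertices are joined through `z`. -/

/-- The cyclic graph of a group: vertices are the nonidentity elements,
two distinct vertices are adjacent iff they generate a cyclic subgroup. -/
def cyclicGraph (G : Type*) [Group G] : SimpleGraph {g : G // g ≠ 1} where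
  Adj x y := x ≠ y ∧ IsCyclic (Subgroup.closure ({x.1, y.1} : Set G))
  symm := ⟨by
    rintro x y ⟨hne, hc⟩
    exact ⟨hne.symm, by rwa [Set.pair_comm]⟩⟩
  loopless := ⟨by rintro x ⟨hne, -⟩; exact hne rfl⟩

/-- A group is a Frobenius group if it has a nontrivial proper subgroup `H`
with `H ∩ H^g = 1` for every `g ∉ H`. -/
def IsFrobenius (G : Type*) [Group G] : Prop :=
  ∃ H : Subgroup G, H ≠ ⊥ ∧ H ≠ ⊤ ∧
    ∀ g : G, g ∉ H → ∀ x : G, x ∈ H → g * x * g⁻¹ ∈ H → x = 1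

/-- A group is generalized quaternion if it is isomorphic to `QuaternionGroup (2 ^ m)`
for some `m ≥ 1` (i.e. a generalized quaternion group of order `2 ^ (m + 2)`). -/
def IsGeneralizedQuaternion (P : Type*) [Group P] : Prop :=
  ∃ m : ℕ, 1 ≤ m ∧ Nonempty (P ≃* QuaternionGroup (2 ^ m))

namespace SimpleGraph

variable {V : Type*} {G : SimpleGraph V} {c : V}

theorem connected_of_forall_ne_adj (hc : ∀ v, v ≠ c → G.Adj v c) : G.Connected :=
  (connected_iff_exists_forall_reachable G).mpr ⟨c, fun v => by
    by_cases hv : v = c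
    · exact hv ▸ Reachable.refl v
    · exact (hc v hv).symm.reachable⟩

theorem dist_le_one_of_forall_ne_adj (hc : ∀ v, v ≠ c → G.Adj v c) (v : V) :
    G.dist v c ≤ 1 := by
  by_cases hv : v = c
  · simp [hv]
  · exact (dist_eq_one_iff_adj.mpr (hc v hv)).le

theorem dist_le_two_of_forall_ne_adj (hc : ∀ v, v ≠ c → G.Adj v c) (u v : V) :
    G.dist u v ≤ 2 :=
  calc G.dist u v ≤ G.dist u c + G.dist c v := (connected_of_forall_ne_adj hc).dist_triangle
    _ ≤ 1 + 1 := add_le_add (dist_le_one_of_forall_ne_adj hc u)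
        (dist_comm.trans_le (dist_le_one_of_forall_ne_adj hc v))

end SimpleGraph

open scoped IsMulCommutative in
theorem IsZGroup.isCyclic_closure_pair {G : Type*} [Group G] [Finite G] [IsZGroup G]
    {a b : G} (hab : Commute a b) : IsCyclic (Subgroup.closure ({a, b} : Set G)) := by
  have : IsMulCommutative (Subgroup.closure ({a, b} : Set G)) :=
    Subgroup.isMulCommutative_closure <| by
      rintro x (rfl | rfl) y (rfl | rfl)
      exacts [rfl, hab, hab.symm, rfl]
  infer_instance

theorem cyclicGraph_adj_of_mem_center {G : Type*} [Group G] [Finite G] [IsZGroup G]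
    {x z : {g : G // g ≠ 1}} (hxz : x ≠ z) (hz : z.1 ∈ Subgroup.center G) :
    (cyclicGraph G).Adj x z :=
  ⟨hxz, IsZGroup.isCyclic_closure_pair (Subgroup.mem_center_iff.mp hz x.1)⟩

theorem stmt_8 {G : Type*} [Group G] [Finite G] (hZ : IsZGroup G)
    (hc : Subgroup.center G ≠ ⊥) :
    (cyclicGraph G).Connected ∧
      ∀ x y : {g : G // g ≠ 1}, (cyclicGraph G).dist x y ≤ 2 := by
  obtain ⟨⟨z, hz⟩, hz_ne⟩ := Subgroup.ne_bot_iff_exists_ne_one.mp hc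
  have hz1 : z ≠ 1 := fun h => hz_ne (Subtype.ext h)
  have hadj : ∀ x : {g : G // g ≠ 1}, x ≠ ⟨z, hz1⟩ → (cyclicGraph G).Adj x ⟨z, hz1⟩ :=
    fun _ hx => cyclicGraph_adj_of_mem_center hx hz
  exact ⟨SimpleGraph.connected_of_forall_ne_adj hadj,
    SimpleGraph.dist_le_two_of_forall_ne_adj hadj⟩
end

section
/- If G is a finite Z-group whose cyclic graph Δ(G) has diameter at most 2, then the center of G is nontrivial. -/
/-!
A finite Z-group has cyclic commutator subgroup and cyclic abelianization, so it is generated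
by two elements `a` and `b`. In the cyclic graph every vertex commutes with its neighbours, so
diameter at most `2` yields a nonidentity `z` commuting with both `a` and `b`; such a `z` is
central.
-/

open Subgroup

namespace SimpleGraph

variable {V : Type*} {Γ : SimpleGraph V} {u v : V}

lemma Reachable.exists_adj_or_eq_of_dist_le_two (h : Γ.Reachable u v) (hd : Γ.dist u v ≤ 2) :
    ∃ w, (Γ.Adj u w ∨ u = w) ∧ (Γ.Adj w v ∨ w = v) := by
  have he : Γ.edist u v ≤ 2 := by rw [← h.coe_dist_eq_edist]; exact_mod_cast hd
  rcases he.lt_or_eq with hlt | heq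
  · exact ⟨v, edist_le_one_iff_adj_or_eq.mp (Order.le_of_lt_add_one hlt), Or.inr rfl⟩
  · obtain ⟨-, -, w, hw⟩ := edist_eq_two_iff.mp heq
    rw [mem_commonNeighbors] at hw
    exact ⟨w, Or.inl hw.1, Or.inl hw.2.symm⟩

end SimpleGraph

section

variable {G : Type*} [Group G]

lemma commute_of_isCyclic_closure_pair {x y : G} (h : IsCyclic (closure ({x, y} : Set G))) :
    Commute x y :=
  setLike_mul_comm (subset_closure (Set.mem_insert x {y}))
    (subset_closure (Set.mem_insert_of_mem x rfl))

lemma commute_of_cyclicGraph_adj_or_eq {x y : {g : G // g ≠ 1}}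
    (h : (cyclicGraph G).Adj x y ∨ x = y) : Commute x.1 y.1 := by
  rcases h with h | rfl
  exacts [commute_of_isCyclic_closure_pair h.2, Commute.refl _]

lemma cyclicGraph.exists_ne_one_commute_of_dist_le_two (hconn : (cyclicGraph G).Connected)
    (hdiam : ∀ x y : {g : G // g ≠ 1}, (cyclicGraph G).dist x y ≤ 2) (a b : G) :
    ∃ z : G, z ≠ 1 ∧ Commute z a ∧ Commute z b := by
  rcases eq_or_ne a 1 with rfl | ha
  · rcases eq_or_ne b 1 with rfl | hb
    · obtain ⟨z, hz⟩ := hconn.nonempty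
      exact ⟨z, hz, Commute.one_right _, Commute.one_right _⟩
    · exact ⟨b, hb, Commute.one_right _, Commute.refl _⟩
  rcases eq_or_ne b 1 with rfl | hb
  · exact ⟨a, ha, Commute.refl _, Commute.one_right _⟩
  obtain ⟨z, hza, hzb⟩ := (hconn ⟨a, ha⟩ ⟨b, hb⟩).exists_adj_or_eq_of_dist_le_two (hdiam _ _)
  exact ⟨z, z.2, (commute_of_cyclicGraph_adj_or_eq hza).symm,
    commute_of_cyclicGraph_adj_or_eq hzb⟩

lemma exists_closure_pair_eq_top_of_isCyclic_quotient (N : Subgroup G) [N.Normal] [IsCyclic N]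
    [IsCyclic (G ⧸ N)] :
    ∃ a b : G, closure ({a, b} : Set G) = ⊤ := by
  obtain ⟨a, ha⟩ := isCyclic_iff_exists_zpowers_eq_top.mp ‹IsCyclic N›
  obtain ⟨b', hb'⟩ := isCyclic_iff_exists_zpowers_eq_top.mp ‹IsCyclic (G ⧸ N)›
  obtain ⟨b, rfl⟩ := QuotientGroup.mk_surjective b'
  refine ⟨a, b, eq_top_iff.mpr fun g _ => ?_⟩
  obtain ⟨k, hk⟩ := mem_zpowers_iff.mp (hb' ▸ mem_top (g : G ⧸ N))
  have hN : (b ^ k)⁻¹ * g ∈ N := by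
    rw [← QuotientGroup.eq, QuotientGroup.mk_zpow, hk]
  obtain ⟨n, hn⟩ := mem_zpowers_iff.mp (ha ▸ mem_top (⟨_, hN⟩ : N))
  have hg : g = b ^ k * (a : G) ^ n := by
    rw [← SubgroupClass.coe_zpow, hn]; group
  rw [hg]
  exact mul_mem (zpow_mem (subset_closure (by simp)) k) (zpow_mem (subset_closure (by simp)) n)

lemma IsZGroup.exists_closure_pair_eq_top [Finite G] [IsZGroup G] :
    ∃ a b : G, closure ({a, b} : Set G) = ⊤ :=
  have := IsZGroup.isCyclic_commutator G
  have : IsCyclic (G ⧸ commutator G) := IsZGroup.isCyclic_abelianization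
  exists_closure_pair_eq_top_of_isCyclic_quotient (commutator G)

lemma mem_center_of_commute_of_closure_pair_eq_top {a b z : G}
    (hab : closure ({a, b} : Set G) = ⊤) (ha : Commute z a) (hb : Commute z b) :
    z ∈ center G := by
  rw [← centralizer_univ, ← coe_top, ← hab, centralizer_closure, mem_centralizer_iff]
  rintro g (rfl | rfl)
  exacts [ha.symm.eq, hb.symm.eq]

end

theorem stmt_9 {G : Type*} [Group G] [Finite G] (hZ : IsZGroup G)
    (hconn : (cyclicGraph G).Connected)
    (hdiam : ∀ x y : {g : G // g ≠ 1}, (cyclicGraph G).dist x y ≤ 2) :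
    Subgroup.center G ≠ ⊥ := by
  obtain ⟨a, b, hab⟩ := hZ.exists_closure_pair_eq_top
  obtain ⟨z, hz, hza, hzb⟩ := cyclicGraph.exists_ne_one_commute_of_dist_le_two hconn hdiam a b
  exact (Subgroup.ne_bot_iff_exists_ne_one).mpr
    ⟨⟨z, mem_center_of_commute_of_closure_pair_eq_top hab hza hzb⟩, by simpa using hz⟩
end

section
/- If a finite group G has a central subgroup ⟨z⟩ of prime order p that is the unique subgroup of G of order p, then z is a dominating vertex of the cyclic graph Δ(G), i.e., ⟨z, g⟩ is cyclic for every g ∈ G. -/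
/-!
If `z ∈ ⟨g⟩` then `⟨z, g⟩ = ⟨g⟩`. Otherwise `p ∤ |g|`, since `⟨g⟩` would contain a subgroup of
order `p`, which must be `⟨z⟩`. Then the central element `z` and `g` commute and have coprime
orders, so both are powers of `z g` and `⟨z, g⟩ = ⟨z g⟩`.
-/

open Subgroup

section

variable {G : Type*} [Group G]

theorem Subgroup.closure_pair_eq_zpowers_of_mem_right {a b : G} (h : a ∈ zpowers b) :
    closure ({a, b} : Set G) = zpowers b := by
  refine le_antisymm ?_ (zpowers_le.mpr (subset_closure (by simp)))
  rw [closure_le]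
  rintro x (rfl | rfl)
  exacts [h, mem_zpowers x]

theorem Commute.mem_zpowers_mul_left_of_coprime {a b : G} (hab : Commute a b)
    (hco : (orderOf a).Coprime (orderOf b)) : a ∈ zpowers (a * b) := by
  obtain ⟨m, hm⟩ := exists_pow_eq_self_of_coprime hco.symm
  -- `(a * b) ^ |b| = a ^ |b|`, and `a ^ |b|` generates `⟨a⟩`.
  have key : ((a * b) ^ orderOf b) ^ m ∈ zpowers (a * b) := pow_mem (pow_mem (mem_zpowers _) _) _
  rwa [hab.mul_pow, pow_orderOf_eq_one, mul_one, hm] at key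

theorem Commute.closure_pair_eq_zpowers_mul_of_coprime {a b : G} (hab : Commute a b)
    (hco : (orderOf a).Coprime (orderOf b)) : closure ({a, b} : Set G) = zpowers (a * b) := by
  have ha := hab.mem_zpowers_mul_left_of_coprime hco
  have hb : b ∈ zpowers (a * b) := by
    simpa using (zpowers (a * b)).mul_mem (inv_mem ha) (mem_zpowers (a * b))
  refine le_antisymm ?_ (zpowers_le.mpr (mul_mem (subset_closure (by simp))
    (subset_closure (by simp))))
  rw [closure_le]
  rintro x (rfl | rfl)
  exacts [ha, hb]

theorem Subgroup.le_zpowers_of_dvd_orderOf {Q : Subgroup G} {p : ℕ}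
    (huniq : ∀ K : Subgroup G, Nat.card K = p → K = Q) {g : G} (hg : orderOf g ≠ 0)
    (hdvd : p ∣ orderOf g) : Q ≤ zpowers g := by
  have hcard : Nat.card (zpowers (g ^ (orderOf g / p))) = p := by
    rw [Nat.card_zpowers, orderOf_pow_orderOf_div hg hdvd]
  rw [← huniq _ hcard, zpowers_le]
  exact pow_mem (mem_zpowers g) _

end

theorem stmt_11 {G : Type*} [Group G] [Finite G] (z : G) (p : ℕ) (hp : p.Prime)
    (hcen : Subgroup.zpowers z ≤ Subgroup.center G)
    (hord : Nat.card (Subgroup.zpowers z) = p)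
    (huniq : ∀ Q : Subgroup G, Nat.card Q = p → Q = Subgroup.zpowers z) :
    ∀ g : G, IsCyclic (Subgroup.closure ({z, g} : Set G)) := by
  intro g
  by_cases hmem : z ∈ zpowers g
  · rw [closure_pair_eq_zpowers_of_mem_right hmem]
    infer_instance
  have hndvd : ¬ p ∣ orderOf g := fun hdvd =>
    hmem (le_zpowers_of_dvd_orderOf huniq (orderOf_pos g).ne' hdvd (mem_zpowers z))
  have hco : (orderOf z).Coprime (orderOf g) := by
    rw [← Nat.card_zpowers, hord]
    exact hp.coprime_iff_not_dvd.mpr hndvd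
  have hcomm : Commute z g := (mem_center_iff.mp (hcen (mem_zpowers z)) g).symm
  rw [hcomm.closure_pair_eq_zpowers_mul_of_coprime hco]
  infer_instance
end
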